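/- arXiv:2602.20134 — 2 statements merged into one kernel-verified Lean document; each statement's English description precedes it below -/
import Mathlib

section
/- Let R_c(ψ,η) = R_0 · ((1-δ)ψ + (1-η)μ)/(ψ+μ) with R_0, δ, μ, η constant parameters satisfying μ > 0, 0 ≤ δ ≤ 1, 0 ≤ η ≤ 1. If 1 < R_0 < 1/(1-δ) and R_0(1-η) > 1, then the threshold vaccination rate ψ_HI = μ(R_0(1-η)-1)/(1-R_0(1-δ)) is positive, and for all ψ > ψ_HI we have R_c(ψ,η) < 1. -/
theorem rc_below_one_above_threshold
    (R0 δ μ η : ℝ)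
    (hμ : 0 < μ) (hδ0 : 0 ≤ δ) (hδ1 : δ ≤ 1) (hη0 : 0 ≤ η) (hη1 : η ≤ 1)
    (hR0 : 1 < R0) (hR0' : R0 < 1 / (1 - δ))
    (hRη : 1 < R0 * (1 - η)) :
    0 < μ * (R0 * (1 - η) - 1) / (1 - R0 * (1 - δ)) ∧
    ∀ ψ : ℝ, μ * (R0 * (1 - η) - 1) / (1 - R0 * (1 - δ)) < ψ →
      R0 * ((1 - δ) * ψ + (1 - η) * μ) / (ψ + μ) < 1 := by
  have hden : 0 < 1 - R0 * (1 - δ) := by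
    rcases eq_or_lt_of_le (sub_nonneg.mpr hδ1) with h | h
    · nlinarith
    · have := (lt_div_iff₀ h).mp hR0'
      linarith
  have hnum : 0 < μ * (R0 * (1 - η) - 1) := by nlinarith
  have hpos : 0 < μ * (R0 * (1 - η) - 1) / (1 - R0 * (1 - δ)) := div_pos hnum hden
  refine ⟨hpos, fun ψ hψ => ?_⟩
  have hψ0 : 0 < ψ := lt_trans hpos hψ
  have hψμ : 0 < ψ + μ := by linarith
  rw [div_lt_one hψμ]
  have := (div_lt_iff₀ hden).mp hψ
  nlinarith
end

section
/- Suppose R_0 > 0, μ > 0, δ ∈ (0,1), η ∈ [0,1), and 1 < R_0(1-η) with R_0(1-δ) < 1. Then the unique ψ ≥ 0 satisfying R_c(ψ,η) = 1 is ψ_HI = μ(R_0(1-η)-1)/(1-R_0(1-δ)). -/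
theorem herd_immunity_threshold_unique
    (R0 δ μ η : ℝ)
    (hR0 : 0 < R0) (hμ : 0 < μ) (hδ0 : 0 < δ) (hδ1 : δ < 1)
    (hη0 : 0 ≤ η) (hη1 : η < 1)
    (h1 : 1 < R0 * (1 - η)) (h2 : R0 * (1 - δ) < 1) :
    0 ≤ μ * (R0 * (1 - η) - 1) / (1 - R0 * (1 - δ)) ∧
    R0 * ((1 - δ) * (μ * (R0 * (1 - η) - 1) / (1 - R0 * (1 - δ))) + (1 - η) * μ) /
      ((μ * (R0 * (1 - η) - 1) / (1 - R0 * (1 - δ))) + μ) = 1 ∧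
    ∀ ψ : ℝ, 0 ≤ ψ →
      R0 * ((1 - δ) * ψ + (1 - η) * μ) / (ψ + μ) = 1 →
      ψ = μ * (R0 * (1 - η) - 1) / (1 - R0 * (1 - δ)) := by
  have hd : 0 < 1 - R0 * (1 - δ) := by linarith
  have hnum : 0 ≤ μ * (R0 * (1 - η) - 1) := by nlinarith
  have hpsi : 0 ≤ μ * (R0 * (1 - η) - 1) / (1 - R0 * (1 - δ)) :=
    div_nonneg hnum hd.le
  refine ⟨hpsi, ?_, ?_⟩
  · have hden : (μ * (R0 * (1 - η) - 1) / (1 - R0 * (1 - δ))) + μ ≠ 0 := by positivity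
    field_simp
    have hne : R0 * δ - R0 * η ≠ 0 := (by nlinarith : 0 < R0 * δ - R0 * η).ne'
    ring_nf
    rw [← sub_mul, mul_inv_cancel₀ hne]
  · intro ψ hψ heq
    have hden : ψ + μ ≠ 0 := by positivity
    rw [div_eq_one_iff_eq hden] at heq
    field_simp
    nlinarith [heq]
end
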